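/- Let λ > 0, α > 0, and let t be a real number with λαe^t < 1. Then Σ_{i=0}^∞ e^{it} (1)_{i,λ} α^i / i! = (1 + λαe^t)^{1/λ}; consequently, for λα < 1 the moment generating function of the degenerate Poisson random variable X ∼ Poi_λ(α) satisfies E[e^{Xt}] = (1+λα)^{−1/λ} (1 + λαe^t)^{1/λ}. -/

import Mathlib

/-- The lambda-falling factorial `(x)_{n,lam}`. -/
noncomputable def dffac (lam x : ℝ) (n : ℕ) : ℝ := ∏ i ∈ Finset.range n, (x - i * lam)

/-- The ordinary falling factorial `(x)_n`. -/
noncomputable def ffac (x : ℝ) (n : ℕ) : ℝ := ∏ i ∈ Finset.range n, (x - i)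

/-- The rising factorial. -/
noncomputable def rfac (x : ℝ) (n : ℕ) : ℝ := ∏ i ∈ Finset.range n, (x + i)

/-- Expectation of `f(X)` for the degenerate Poisson random variable `X ~ Poi_lam(a)`. -/
noncomputable def degPoiE (lam a : ℝ) (f : ℕ → ℝ) : ℝ :=
  (1 + lam * a) ^ (-(1 / lam)) * ∑' i : ℕ, f i * dffac lam 1 i * a ^ i / (i.factorial : ℝ)

lemma ffac_succ (x : ℝ) (n : ℕ) : ffac x (n + 1) = ffac x n * (x - n) :=
  Finset.prod_range_succ _ _

lemma rfac_succ (x : ℝ) (n : ℕ) : rfac x (n + 1) = rfac x n * (x + n) :=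
  Finset.prod_range_succ _ _

lemma rfac_pos {x : ℝ} (hx : 0 < x) (n : ℕ) : 0 < rfac x n :=
  Finset.prod_pos fun i _ => by positivity

lemma abs_ffac_le {x : ℝ} (hx : 0 ≤ x) (n : ℕ) : |ffac x n| ≤ rfac x n := by
  rw [ffac, rfac, Finset.abs_prod]
  refine Finset.prod_le_prod (fun i _ => abs_nonneg _) fun i _ => ?_
  have hi : (0:ℝ) ≤ (i:ℝ) := Nat.cast_nonneg i
  rw [abs_le]
  constructor <;> linarith

lemma summable_aux {x r : ℝ} (hx : 0 < x) (hr0 : 0 < r) (hr1 : r < 1) :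
    Summable (fun n : ℕ => rfac x n / n.factorial * (n * r ^ (n - 1))) := by
  set ρ : ℝ := (1 + r) / 2 with hρ
  have hρ1 : ρ < 1 := by rw [hρ]; linarith
  have hρr : r < ρ := by rw [hρ]; linarith
  obtain ⟨n0, hn0⟩ := exists_nat_ge (x * r / (ρ - r))
  have hxr : x * r ≤ (ρ - r) * n0 := by
    rw [div_le_iff₀ (by linarith)] at hn0
    linarith
  apply summable_of_ratio_norm_eventually_le hρ1
  filter_upwards [Filter.eventually_ge_atTop (n0 + 1)] with n hn
  obtain ⟨m, rfl⟩ : ∃ m, n = m + 1 := ⟨n - 1, by omega⟩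
  have hmn0 : (n0 : ℝ) ≤ (m : ℝ) + 1 := by
    have h' : (n0:ℕ) ≤ m + 1 := by omega
    exact_mod_cast h'
  have hfac : (0:ℝ) < (m+1).factorial := by positivity
  have key : rfac x (m+2) / ((m+2).factorial:ℝ) * (((m:ℝ)+2) * r ^ ((m+2) - 1))
      = (rfac x (m+1) / ((m+1).factorial:ℝ) * (((m:ℝ)+1) * r ^ ((m+1) - 1)))
        * ((x + ((m:ℝ)+1)) * r / ((m:ℝ)+1)) := by
    have h1 : (m+2) - 1 = (m+1 : ℕ) := rfl
    have h2 : (m+1) - 1 = (m : ℕ) := rfl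
    rw [h1, h2, show (m+2 : ℕ) = (m+1) + 1 from rfl, rfac_succ, Nat.factorial_succ (m+1)]
    push_cast
    rw [pow_succ]
    field_simp
    ring
  have hterm_nonneg : 0 ≤ rfac x (m+1) / ((m+1).factorial:ℝ) * ((((m+1:ℕ)):ℝ) * r ^ ((m+1) - 1)) :=
    mul_nonneg (div_nonneg (rfac_pos hx (m+1)).le (by positivity)) (by positivity)
  have hratio : (x + ((m:ℝ)+1)) * r / ((m:ℝ)+1) ≤ ρ := by
    rw [div_le_iff₀ (by positivity)]
    nlinarith
  have h2 : rfac x (m+2) / ((m+2).factorial:ℝ) * ((((m+2:ℕ)):ℝ) * r ^ ((m+2) - 1))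
      ≤ ρ * (rfac x (m+1) / ((m+1).factorial:ℝ) * ((((m+1:ℕ)):ℝ) * r ^ ((m+1) - 1))) := by
    have hkey2 : rfac x (m+2) / ((m+2).factorial:ℝ) * ((((m+2:ℕ)):ℝ) * r ^ ((m+2) - 1))
        = (rfac x (m+1) / ((m+1).factorial:ℝ) * ((((m+1:ℕ)):ℝ) * r ^ ((m+1) - 1)))
          * ((x + ((m:ℝ)+1)) * r / ((m:ℝ)+1)) := by
      push_cast
      exact key
    rw [hkey2, mul_comm ρ _]
    exact mul_le_mul_of_nonneg_left hratio hterm_nonneg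
  have hnn2 : 0 ≤ rfac x (m+2) / ((m+2).factorial:ℝ) * ((((m+2:ℕ)):ℝ) * r ^ ((m+2) - 1)) :=
    mul_nonneg (div_nonneg (rfac_pos hx (m+2)).le (by positivity)) (by positivity)
  show ‖rfac x (m+2) / ((m+2).factorial:ℝ) * ((((m+2:ℕ)):ℝ) * r ^ ((m+2) - 1))‖
      ≤ ρ * ‖rfac x (m+1) / ((m+1).factorial:ℝ) * ((((m+1:ℕ)):ℝ) * r ^ ((m+1) - 1))‖
  rw [Real.norm_eq_abs, Real.norm_eq_abs, abs_of_nonneg hnn2, abs_of_nonneg hterm_nonneg]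
  exact h2

lemma binom_sum {x y : ℝ} (hx : 0 < x) (hy0 : 0 ≤ y) (hy1 : y < 1) :
    (Summable fun n : ℕ => ffac x n * y ^ n / n.factorial) ∧
    ∑' n : ℕ, ffac x n * y ^ n / n.factorial = (1 + y) ^ x := by
  set r : ℝ := (1 + y) / 2 with hrdef
  have hr0 : 0 < r := by rw [hrdef]; linarith
  have hry : y < r := by rw [hrdef]; linarith
  have hr1 : r < 1 := by rw [hrdef]; linarith
  set c : ℕ → ℝ := fun n => ffac x n / n.factorial with hc
  set g : ℕ → ℝ → ℝ := fun n s => c n * s ^ n with hg_def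
  set g' : ℕ → ℝ → ℝ := fun n s => c n * (n * s ^ (n - 1)) with hg'_def
  set u : ℕ → ℝ := fun n => rfac x n / n.factorial * (n * r ^ (n - 1)) with hu_def
  have hu : Summable u := summable_aux hx hr0 hr1
  have hg : ∀ n s, HasDerivAt (g n) (g' n s) s := fun n s =>
    (hasDerivAt_pow n s).const_mul (c n)
  have hmem0 : (0:ℝ) ∈ Set.Ioo (-r) r := ⟨by linarith, hr0⟩
  have hmemy : y ∈ Set.Ioo (-r) r := ⟨by linarith, hry⟩
  have hg' : ∀ n s, s ∈ Set.Ioo (-r) r → ‖g' n s‖ ≤ u n := by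
    intro n s hs
    have hsr : |s| ≤ r := le_of_lt (abs_lt.mpr ⟨hs.1, hs.2⟩)
    have h1 : ‖g' n s‖ = |c n| * ((n:ℝ) * |s| ^ (n-1)) := by
      rw [hg'_def, Real.norm_eq_abs, abs_mul, abs_mul, abs_pow, Nat.abs_cast]
    rw [h1, hu_def]
    have hcn : |c n| ≤ rfac x n / n.factorial := by
      rw [hc]
      rw [abs_div, Nat.abs_cast]
      gcongr
      exact abs_ffac_le hx.le n
    have hpow : |s| ^ (n-1) ≤ r ^ (n-1) := pow_le_pow_left₀ (abs_nonneg _) hsr _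
    have h2 : (n:ℝ) * |s| ^ (n-1) ≤ (n:ℝ) * r ^ (n-1) :=
      mul_le_mul_of_nonneg_left hpow (Nat.cast_nonneg n)
    exact mul_le_mul hcn h2 (by positivity) (div_nonneg (rfac_pos hx n).le (by positivity))
  have hg0 : Summable fun n => g n 0 := by
    apply summable_of_ne_finset_zero (s := ({0} : Finset ℕ))
    intro n hn
    have : n ≠ 0 := by simpa using hn
    simp [hg_def, zero_pow this]
  have hconn : IsPreconnected (Set.Ioo (-r) r : Set ℝ) := (convex_Ioo _ _).isPreconnected
  have hF : ∀ s ∈ Set.Ioo (-r) r,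
      HasDerivAt (fun z => ∑' n, g n z) (∑' n, g' n s) s := fun s hs =>
    hasDerivAt_tsum_of_isPreconnected hu isOpen_Ioo hconn
      (fun n z hz => hg n z) hg' hmem0 hg0 hs
  have hSum : ∀ s ∈ Set.Ioo (-r) r, Summable fun n => g n s := fun s hs =>
    summable_of_summable_hasDerivAt_of_isPreconnected hu isOpen_Ioo hconn
      (fun n z hz => hg n z) hg' hmem0 hg0 hs
  have hD : ∀ s ∈ Set.Ioo (-r) r, Summable fun n => g' n s := fun s hs =>
    Summable.of_norm_bounded hu (fun n => hg' n s hs)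
  -- the key ODE identity
  have hkey : ∀ s ∈ Set.Ioo (-r) r,
      (1 + s) * (∑' n, g' n s) = x * ∑' n, g n s := by
    intro s hs
    have hDs := hD s hs
    have hFs := hSum s hs
    have hrec : ∀ n : ℕ, g' (n+1) s = x * g n s - g' n s * s := by
      intro n
      cases n with
      | zero =>
        simp [hg'_def, hg_def, hc, ffac, Finset.prod_range_one, Finset.prod_range_zero]
      | succ m =>
        simp only [hg'_def, hg_def, hc]
        have h1 : (m+1+1) - 1 = (m+1 : ℕ) := rfl
        have h2 : (m+1) - 1 = (m : ℕ) := rfl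
        rw [h1, h2, ffac_succ x (m+1), Nat.factorial_succ (m+1)]
        have hfac : ((m+1).factorial : ℝ) ≠ 0 := by positivity
        push_cast
        rw [pow_succ]
        field_simp
    have hzero : g' 0 s = 0 := by simp [hg'_def]
    have step1 : (∑' n, g' n s) = ∑' n, g' (n+1) s := by
      rw [Summable.tsum_eq_zero_add hDs, hzero, zero_add]
    have hs1 : Summable fun n => x * g n s := hFs.mul_left x
    have hs2 : Summable fun n => g' n s * s := hDs.mul_right s
    have step2 : (∑' n, g' (n+1) s) = x * (∑' n, g n s) - (∑' n, g' n s) * s := by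
      calc (∑' n, g' (n+1) s) = ∑' n, (x * g n s - g' n s * s) := tsum_congr hrec
        _ = (∑' n, x * g n s) - ∑' n, g' n s * s := Summable.tsum_sub hs1 hs2
        _ = x * (∑' n, g n s) - (∑' n, g' n s) * s := by
            rw [tsum_mul_left, tsum_mul_right]
    have := step1.trans step2
    linarith [this]
  -- the function h
  set F : ℝ → ℝ := fun z => ∑' n, g n z with hFdef
  set h : ℝ → ℝ := fun z => F z * (1 + z) ^ (-x) with hhdef
  have hIccsub : Set.Icc (0:ℝ) y ⊆ Set.Ioo (-r) r := fun s hs =>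
    ⟨by linarith [hs.1], lt_of_le_of_lt hs.2 hry⟩
  have hderiv : ∀ s ∈ Set.Icc (0:ℝ) y, HasDerivAt h 0 s := by
    intro s hs
    have hsmem := hIccsub hs
    have h1s : (0:ℝ) < 1 + s := by linarith [hs.1]
    have H1 : HasDerivAt F (∑' n, g' n s) s := hF s hsmem
    have H2 : HasDerivAt (fun z : ℝ => (1 + z) ^ (-x))
        ((-x) * (1 + s) ^ (-x - 1) * 1) s := by
      have hinner : HasDerivAt (fun z : ℝ => 1 + z) 1 s := by
        simpa using (hasDerivAt_id s).const_add (1:ℝ)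
      exact (Real.hasDerivAt_rpow_const (Or.inl h1s.ne')).comp s hinner
    have H := H1.mul H2
    have hpow : (1 + s) ^ (-x) = (1 + s) ^ (-x - 1) * (1 + s) := by
      have hadd := Real.rpow_add h1s (-x - 1) 1
      rw [Real.rpow_one] at hadd
      have he : (-x - 1) + 1 = -x := by ring
      rw [he] at hadd
      exact hadd
    have hk := hkey s hsmem
    convert H using 1
    case e'_4 => rfl
    case e'_5 => rfl
    case e'_8 => rfl
    rw [hpow]
    linear_combination (-(1 + s) ^ (-x - 1)) * hk
  have hcont : ContinuousOn h (Set.Icc 0 y) := fun s hs =>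
    (hderiv s hs).continuousAt.continuousWithinAt
  have hconst : h y = h 0 :=
    constant_of_has_deriv_right_zero hcont
      (fun s hs => (hderiv s (Set.Ico_subset_Icc_self hs)).hasDerivWithinAt)
      y (Set.right_mem_Icc.mpr hy0)
  have hF0 : F 0 = 1 := by
    have h1 : (∑' n, g n 0) = g 0 0 :=
      tsum_eq_single 0 (fun n hn => by simp [hg_def, zero_pow hn])
    have h2 : F 0 = ∑' n, g n 0 := by rw [hFdef]
    rw [h2, h1]
    simp [hg_def, hc, ffac]
  have hh0 : h 0 = 1 := by
    rw [hhdef]; simp [hF0]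
  have h1y : (0:ℝ) < 1 + y := by linarith
  have hfinal : F y = (1 + y) ^ x := by
    have h1 : F y * (1 + y) ^ (-x) = 1 := hconst.trans hh0
    rw [Real.rpow_neg h1y.le] at h1
    have hne : (1 + y) ^ x ≠ 0 := (Real.rpow_pos_of_pos h1y x).ne'
    field_simp at h1
    exact h1
  have hgy : ∀ n, g n y = ffac x n * y ^ n / n.factorial := by
    intro n; rw [hg_def, hc]; ring
  constructor
  · exact (hSum y hmemy).congr hgy
  · rw [← hfinal, hFdef]
    exact tsum_congr fun n => (hgy n).symm

theorem stmt_16 (lam a t : ℝ) (hlam : 0 < lam) (ha : 0 < a)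
    (hlat : lam * a * Real.exp t < 1) :
    (∑' i : ℕ, Real.exp (i * t) * dffac lam 1 i * a ^ i / (i.factorial : ℝ) =
      (1 + lam * a * Real.exp t) ^ (1 / lam)) ∧
    (lam * a < 1 →
      degPoiE lam a (fun i => Real.exp (i * t)) =
        (1 + lam * a) ^ (-(1 / lam)) * (1 + lam * a * Real.exp t) ^ (1 / lam)) := by
  have hx : 0 < 1 / lam := by positivity
  have hy0 : 0 ≤ lam * a * Real.exp t := by positivity
  obtain ⟨hsum, hval⟩ := binom_sum hx hy0 hlat
  have hdf : ∀ n : ℕ, dffac lam 1 n = lam ^ n * ffac (1/lam) n := by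
    intro n
    calc dffac lam 1 n = ∏ i ∈ Finset.range n, (lam * (1/lam - i)) := by
          apply Finset.prod_congr rfl
          intro i _
          field_simp
      _ = lam ^ n * ffac (1/lam) n := by
          rw [Finset.prod_mul_distrib, Finset.prod_const, Finset.card_range, ffac]
  have key : (∑' i : ℕ, Real.exp (i * t) * dffac lam 1 i * a ^ i / (i.factorial : ℝ))
      = ∑' n : ℕ, ffac (1/lam) n * (lam * a * Real.exp t) ^ n / n.factorial := by
    apply tsum_congr
    intro n
    rw [hdf n, Real.exp_nat_mul, mul_pow, mul_pow]
    ring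
  refine ⟨key.trans hval, fun _ => ?_⟩
  simp only [degPoiE]
  rw [key.trans hval]
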